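/- Let (M, d) be a metric space which is not a complete metric space, and let q : ℕ → M be a surjective function. Then: (i) for every a ∈ M, inf_{n ∈ ℕ} sup_{R ∈ ℕ} min{1, R · d(a, q(n))} = 0; and (ii) there exists a point x in the metric completion of M such that inf_{n ∈ ℕ} sup_{R ∈ ℕ} min{1, R · d(x, ι(q(n)))} = 1, where ι : M → completion(M) is the canonical isometric embedding and d also denotes the metric of the completion. -/
import Mathlib

open UniformSpace

lemma sup_min_pos {d : ℝ} (hd : 0 < d) : (⨆ R : ℕ, min 1 ((R : ℝ) * d)) = 1 := by
  have hbdd : BddAbove (Set.range fun R : ℕ => min 1 ((R : ℝ) * d)) := by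
    refine ⟨1, ?_⟩
    rintro x ⟨R, rfl⟩
    exact min_le_left _ _
  apply le_antisymm
  · exact ciSup_le fun R => min_le_left _ _
  · obtain ⟨R, hR⟩ := exists_nat_gt (1 / d)
    have h1 : (1 : ℝ) ≤ (R : ℝ) * d := by
      rw [div_lt_iff₀ hd] at hR
      linarith
    have := le_ciSup hbdd R
    simpa [min_eq_left h1] using this

lemma sup_min_zero : (⨆ R : ℕ, min 1 ((R : ℝ) * 0)) = 0 := by
  simp

/-- If `M` is a non-complete metric space and `q : ℕ → M` is surjective, then
(i) for every `a ∈ M`, `inf_n sup_R min 1 (R * d(a, q n)) = 0`, and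
(ii) there is a point `x` of the metric completion of `M` with
`inf_n sup_R min 1 (R * d(x, q n)) = 1`. -/
theorem incomplete_not_elem_equiv_completion {M : Type*} [MetricSpace M]
    (hM : ¬ CompleteSpace M) (q : ℕ → M) (hq : Function.Surjective q) :
    (∀ a : M, (⨅ n : ℕ, ⨆ R : ℕ, min 1 ((R : ℝ) * dist a (q n))) = 0) ∧
    (∃ x : UniformSpace.Completion M,
      (⨅ n : ℕ, ⨆ R : ℕ,
        min 1 ((R : ℝ) * dist x ((q n : UniformSpace.Completion M)))) = 1) := by
  constructor
  · intro a
    obtain ⟨n, hn⟩ := hq a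
    have hbddB : BddBelow (Set.range fun n : ℕ => ⨆ R : ℕ, min 1 ((R : ℝ) * dist a (q n))) := by
      refine ⟨0, ?_⟩
      rintro x ⟨m, rfl⟩
      have hbdd : BddAbove (Set.range fun R : ℕ => min 1 ((R : ℝ) * dist a (q m))) := by
        refine ⟨1, ?_⟩
        rintro x ⟨R, rfl⟩
        exact min_le_left _ _
      have := le_ciSup hbdd 0
      simpa using this.trans' (by simp)
    apply le_antisymm
    · have := ciInf_le hbddB n
      refine this.trans ?_
      rw [hn]
      simp
    · apply le_ciInf
      intro m
      have hbdd : BddAbove (Set.range fun R : ℕ => min 1 ((R : ℝ) * dist a (q m))) := by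
        refine ⟨1, ?_⟩
        rintro x ⟨R, rfl⟩
        exact min_le_left _ _
      have := le_ciSup hbdd 0
      simpa using this.trans' (by simp)
  · -- there is a point not in the range of coe
    have hsurj : ¬ Function.Surjective ((↑) : M → Completion M) := by
      intro h
      have hbij : Function.Bijective ((↑) : M → Completion M) :=
        ⟨Completion.coe_injective M, h⟩
      have e : M ≃ᵢ Completion M :=
        { toEquiv := Equiv.ofBijective _ hbij
          isometry_toFun := Completion.coe_isometry }
      exact hM (e.completeSpace_iff.2 inferInstance)
    simp only [Function.Surjective, not_forall] at hsurj
    obtain ⟨x, hx⟩ := hsurj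
    push_neg at hx
    refine ⟨x, ?_⟩
    have hpos : ∀ n : ℕ, 0 < dist x ((q n : Completion M)) := by
      intro n
      rw [dist_pos]
      exact fun h => hx (q n) h.symm
    have : ∀ n : ℕ, (⨆ R : ℕ, min 1 ((R : ℝ) * dist x ((q n : Completion M)))) = 1 :=
      fun n => sup_min_pos (hpos n)
    simp only [this]
    exact ciInf_const
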